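/- Let A₀ be an n×n real matrix and P₀ a symmetric positive definite matrix satisfying the Lyapunov equation P₀A₀ + A₀ᵀP₀ = −I. Then for all t ≥ 0, Tr(e^{A₀ᵀt} e^{A₀t}) ≤ n·(λ̄(P₀)/λ̲(P₀))·e^{−t/λ̄(P₀)}, where λ̲(P₀) and λ̄(P₀) are the smallest and largest eigenvalues of P₀. -/

import Mathlib

/-!
Along a solution of `x' = A₀ x`, the Lyapunov function `V = xᵀ P₀ x` satisfies `V' = -|x|²`.
Since `λ̲(P₀) |x|² ≤ V ≤ λ̄(P₀) |x|²`, this gives `V' ≤ -V / λ̄(P₀)`, so by Grönwall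
`V(t) ≤ e^{-t/λ̄(P₀)} V(0)`, and hence `|x(t)|² ≤ (λ̄(P₀)/λ̲(P₀)) e^{-t/λ̄(P₀)} |x(0)|²`.
Summing this over the solutions `e^{A₀t} eᵢ` gives the bound on
`Tr(e^{A₀ᵀt} e^{A₀t}) = ∑ᵢ |e^{A₀t} eᵢ|²`.
-/

open Matrix

attribute [local instance] Matrix.frobeniusNormedAddCommGroup Matrix.frobeniusNormedSpace
  Matrix.frobeniusNormedRing Matrix.frobeniusNormedAlgebra

section

variable {n : Type*} [Fintype n]

theorem OrthonormalBasis.dotProduct_eq_sum (b : OrthonormalBasis n ℝ (EuclideanSpace ℝ n))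
    (x y : n → ℝ) : x ⬝ᵥ y = ∑ i, (x ⬝ᵥ b i) * (y ⬝ᵥ b i) := by
  have := b.sum_inner_mul_inner (WithLp.toLp 2 x) (WithLp.toLp 2 y)
  simp only [EuclideanSpace.inner_eq_star_dotProduct, star_trivial] at this
  simp only [← this, dotProduct_comm x]

namespace Matrix.IsHermitian

variable [DecidableEq n] {A : Matrix n n ℝ} (hA : A.IsHermitian)

theorem dotProduct_mulVec_eq_sum (x : n → ℝ) :
    x ⬝ᵥ (A *ᵥ x) = ∑ i, hA.eigenvalues i * (x ⬝ᵥ hA.eigenvectorBasis i) ^ 2 := by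
  rw [hA.eigenvectorBasis.dotProduct_eq_sum]
  refine Finset.sum_congr rfl fun i _ => ?_
  have hsymm : Aᵀ = A := hA
  rw [dotProduct_comm (A *ᵥ x), dotProduct_mulVec, ← mulVec_transpose, hsymm,
    mulVec_eigenvectorBasis, smul_dotProduct, smul_eq_mul, dotProduct_comm _ x]
  ring

theorem iInf_eigenvalues_mul_dotProduct_self_le (x : n → ℝ) :
    (⨅ i, hA.eigenvalues i) * (x ⬝ᵥ x) ≤ x ⬝ᵥ (A *ᵥ x) := by
  rw [hA.dotProduct_mulVec_eq_sum, hA.eigenvectorBasis.dotProduct_eq_sum, Finset.mul_sum]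
  refine Finset.sum_le_sum fun i _ => ?_
  rw [← sq]
  exact mul_le_mul_of_nonneg_right (ciInf_le (Set.finite_range _).bddBelow i) (sq_nonneg _)

theorem dotProduct_mulVec_le_iSup_eigenvalues_mul (x : n → ℝ) :
    x ⬝ᵥ (A *ᵥ x) ≤ (⨆ i, hA.eigenvalues i) * (x ⬝ᵥ x) := by
  rw [hA.dotProduct_mulVec_eq_sum, hA.eigenvectorBasis.dotProduct_eq_sum, Finset.mul_sum]
  refine Finset.sum_le_sum fun i _ => ?_
  rw [← sq]
  exact mul_le_mul_of_nonneg_right (le_ciSup (Set.finite_range _).bddAbove i) (sq_nonneg _)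

end Matrix.IsHermitian

theorem HasDerivAt.dotProduct {f g : ℝ → n → ℝ} {f' g' : n → ℝ} {t : ℝ}
    (hf : HasDerivAt f f' t) (hg : HasDerivAt g g' t) :
    HasDerivAt (fun s => f s ⬝ᵥ g s) (f' ⬝ᵥ g t + f t ⬝ᵥ g') t := by
  unfold _root_.dotProduct
  rw [← Finset.sum_add_distrib]
  exact HasDerivAt.fun_sum fun i _ => (hasDerivAt_pi.1 hf i).mul (hasDerivAt_pi.1 hg i)

theorem HasDerivAt.mulVec {m : Type*} [Fintype m] {f : ℝ → n → ℝ} {f' : n → ℝ} {t : ℝ}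
    (A : Matrix m n ℝ) (hf : HasDerivAt f f' t) : HasDerivAt (fun s => A *ᵥ f s) (A *ᵥ f') t :=
  A.mulVecLin.toContinuousLinearMap.hasFDerivAt.comp_hasDerivAt t hf

theorem hasDerivAt_exp_smul_mulVec [DecidableEq n] (A : Matrix n n ℝ) (v : n → ℝ) (t : ℝ) :
    HasDerivAt (fun s : ℝ => NormedSpace.exp (s • A) *ᵥ v)
      (A *ᵥ (NormedSpace.exp (t • A) *ᵥ v)) t := by
  rw [mulVec_mulVec]
  exact ((mulVecBilin ℝ ℝ).flip v).toContinuousLinearMap.hasFDerivAt.comp_hasDerivAt t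
    (hasDerivAt_exp_smul_const' A t)

theorem Matrix.trace_transpose_mul_self_eq_sum {m R : Type*} [Fintype m] [DecidableEq n]
    [NonAssocSemiring R] (B : Matrix m n R) :
    (Bᵀ * B).trace = ∑ i, (B *ᵥ Pi.single i 1) ⬝ᵥ (B *ᵥ Pi.single i 1) := by
  simp only [trace, diag, mul_apply, transpose_apply, mulVec_single_one, dotProduct, col_apply]

theorem le_mul_exp_of_hasDerivAt_le_mul {f f' : ℝ → ℝ} {K t : ℝ}
    (hf : ∀ s, HasDerivAt f (f' s) s) (bound : ∀ s, f' s ≤ K * f s) (ht : 0 ≤ t) :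
    f t ≤ f 0 * Real.exp (K * t) := by
  have := le_gronwallBound_of_liminf_deriv_right_le (ε := 0)
    (fun s _ => (hf s).continuousAt.continuousWithinAt)
    (fun s _ _ hr => (hf s).hasDerivWithinAt.liminf_right_slope_le hr) le_rfl
    (fun s _ => (bound s).trans_eq (add_zero _).symm) t ⟨ht, le_rfl⟩
  simpa [gronwallBound_ε0] using this

section Lyapunov

variable [DecidableEq n] {A P : Matrix n n ℝ}

theorem HasDerivAt.dotProduct_mulVec_of_lyapunov (hlyap : P * A + Aᵀ * P = -1)
    {x : ℝ → n → ℝ} {t : ℝ} (hx : HasDerivAt x (A *ᵥ x t) t) :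
    HasDerivAt (fun s => x s ⬝ᵥ (P *ᵥ x s)) (-(x t ⬝ᵥ x t)) t := by
  convert hx.dotProduct (hx.mulVec P) using 1
  rw [dotProduct_mulVec, vecMul_mulVec, mulVec_mulVec, ← dotProduct_mulVec, ← dotProduct_add,
    ← add_mulVec, add_comm, hlyap, neg_mulVec, one_mulVec, dotProduct_neg]

theorem dotProduct_self_le_of_lyapunov [Nonempty n] (hP : P.PosDef)
    (hlyap : P * A + Aᵀ * P = -1) {x : ℝ → n → ℝ} (hx : ∀ s, HasDerivAt x (A *ᵥ x s) s)
    {t : ℝ} (ht : 0 ≤ t) :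
    x t ⬝ᵥ x t ≤ (⨆ i, hP.1.eigenvalues i) / (⨅ i, hP.1.eigenvalues i) *
      Real.exp (-t / (⨆ i, hP.1.eigenvalues i)) * (x 0 ⬝ᵥ x 0) := by
  have hm : 0 < ⨅ i, hP.1.eigenvalues i := by
    obtain ⟨i, hi⟩ := exists_eq_ciInf_of_finite (f := hP.1.eigenvalues)
    exact hi ▸ hP.eigenvalues_pos i
  have hM : 0 < ⨆ i, hP.1.eigenvalues i := hm.trans_le <|
    ciInf_le_ciSup (Set.finite_range _).bddBelow (Set.finite_range _).bddAbove
  set M := ⨆ i, hP.1.eigenvalues i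
  set m := ⨅ i, hP.1.eigenvalues i
  set V := fun s => x s ⬝ᵥ (P *ᵥ x s)
  have hV : ∀ s, HasDerivAt V (-(x s ⬝ᵥ x s)) s := fun s =>
    (hx s).dotProduct_mulVec_of_lyapunov hlyap
  have hdecay : V t ≤ V 0 * Real.exp (-t / M) := by
    have := le_mul_exp_of_hasDerivAt_le_mul (K := -1 / M) hV (fun s => ?_) ht
    · rwa [div_mul_eq_mul_div, neg_one_mul] at this
    · rw [div_mul_eq_mul_div, neg_one_mul, neg_div, neg_le_neg_iff, div_le_iff₀ hM, mul_comm]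
      exact hP.1.dotProduct_mulVec_le_iSup_eigenvalues_mul (x s)
  calc x t ⬝ᵥ x t ≤ V t / m := by
        rw [le_div_iff₀ hm, mul_comm]
        exact hP.1.iInf_eigenvalues_mul_dotProduct_self_le (x t)
    _ ≤ V 0 * Real.exp (-t / M) / m := by gcongr
    _ ≤ M * (x 0 ⬝ᵥ x 0) * Real.exp (-t / M) / m := by
        gcongr
        exact hP.1.dotProduct_mulVec_le_iSup_eigenvalues_mul (x 0)
    _ = M / m * Real.exp (-t / M) * (x 0 ⬝ᵥ x 0) := by ring

end Lyapunov

end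

theorem stmt_3_general (n : ℕ) (A₀ P₀ : Matrix (Fin n) (Fin n) ℝ)
    (hP : P₀.PosDef) (hlyap : P₀ * A₀ + A₀ᵀ * P₀ = -1) :
    ∀ t : ℝ, 0 ≤ t →
      (NormedSpace.exp (t • A₀ᵀ) * NormedSpace.exp (t • A₀)).trace ≤
        (n : ℝ) * ((⨆ i, hP.1.eigenvalues i) / (⨅ i, hP.1.eigenvalues i)) *
          Real.exp (-t / (⨆ i, hP.1.eigenvalues i)) := by
  intro t ht
  rw [← transpose_smul, Matrix.exp_transpose, trace_transpose_mul_self_eq_sum]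
  set M := ⨆ i, hP.1.eigenvalues i
  set m := ⨅ i, hP.1.eigenvalues i
  refine (Finset.sum_le_card_nsmul _ _ (M / m * Real.exp (-t / M)) fun i _ => ?_).trans_eq ?_
  · have : Nonempty (Fin n) := ⟨i⟩
    simpa only [zero_smul, NormedSpace.exp_zero, one_mulVec, single_dotProduct,
      Pi.single_eq_same, mul_one] using dotProduct_self_le_of_lyapunov hP hlyap
      (hasDerivAt_exp_smul_mulVec A₀ (Pi.single i 1)) ht
  · simp [mul_assoc]

theorem stmt_3 (n : ℕ) (hn : 0 < n) (A₀ P₀ : Matrix (Fin n) (Fin n) ℝ)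
    (hP : P₀.PosDef) (hlyap : P₀ * A₀ + A₀ᵀ * P₀ = -1) :
    ∀ t : ℝ, 0 ≤ t →
      (NormedSpace.exp (t • A₀ᵀ) * NormedSpace.exp (t • A₀)).trace ≤
        (n : ℝ) * ((⨆ i, hP.1.eigenvalues i) / (⨅ i, hP.1.eigenvalues i)) *
          Real.exp (-t / (⨆ i, hP.1.eigenvalues i)) :=
  stmt_3_general n A₀ P₀ hP hlyap
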